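/- arXiv:2402.08082 — 2 statements merged into one kernel-verified Lean document; each statement's English description precedes it below -/
import Mathlib

section
/- Suppose f: ℝ^d → ℝ satisfies f(x) ≤ β‖x‖² for all x, where 0 < β < 1/2, and let p_0(x) = Z^{-1} exp(-‖x‖²/2 + f(x)). Then for all t > 0 and all x ∈ ℝ^d, the OU density p_t satisfies p_t(x) ≤ Z^{-1}(1-2β)^{-d/2} exp(-(1-2β)‖x‖²/2). -/
open MeasureTheory Real
open scoped RealInnerProductSpace

lemma my_integrable {d : ℕ} {b : ℝ} (hb : 0 < b) (c : ℝ) (w : EuclideanSpace ℝ (Fin d)) :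
    Integrable (fun v : EuclideanSpace ℝ (Fin d) =>
      Real.exp (-b * ‖v‖ ^ 2 + c * ⟪w, v⟫)) := by
  have h := (GaussianFourier.integrable_cexp_neg_mul_sq_norm_add
    (V := EuclideanSpace ℝ (Fin d)) (b := (b : ℂ)) (by simpa using hb) (c : ℂ) w).re
  refine h.congr (Filter.Eventually.of_forall fun v => ?_)
  have : (-(b:ℂ) * (‖v‖:ℂ) ^ 2 + (c:ℂ) * (⟪w, v⟫ : ℝ)) = ((-b * ‖v‖^2 + c * ⟪w, v⟫ : ℝ) : ℂ) := by
    push_cast; ring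
  simp only [RCLike.re_to_complex]
  rw [this, ← Complex.ofReal_exp, Complex.ofReal_re]

lemma my_integral {d : ℕ} {b : ℝ} (hb : 0 < b) (c : ℝ) (w : EuclideanSpace ℝ (Fin d)) :
    ∫ v : EuclideanSpace ℝ (Fin d), Real.exp (-b * ‖v‖ ^ 2 + c * ⟪w, v⟫) =
      (π / b) ^ ((d : ℝ) / 2) * Real.exp (c ^ 2 * ‖w‖ ^ 2 / (4 * b)) := by
  rw [← Complex.ofReal_inj]
  have h := GaussianFourier.integral_cexp_neg_mul_sq_norm_add
    (V := EuclideanSpace ℝ (Fin d)) (b := (b : ℂ)) (by simpa using hb) (c : ℂ) w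
  calc ((∫ v : EuclideanSpace ℝ (Fin d), Real.exp (-b * ‖v‖ ^ 2 + c * ⟪w, v⟫) : ℝ) : ℂ)
      = ∫ v : EuclideanSpace ℝ (Fin d),
          ((Real.exp (-b * ‖v‖ ^ 2 + c * ⟪w, v⟫) : ℝ) : ℂ) := integral_ofReal.symm
    _ = ∫ v : EuclideanSpace ℝ (Fin d),
          Complex.exp (-(b:ℂ) * ‖v‖ ^ 2 + (c:ℂ) * (⟪w, v⟫ : ℝ)) := by
        congr 1; funext v
        rw [Complex.ofReal_exp]; push_cast; ring_nf
    _ = (↑π / (b:ℂ)) ^ ((Module.finrank ℝ (EuclideanSpace ℝ (Fin d))) / 2 : ℂ) *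
        Complex.exp ((c:ℂ) ^ 2 * (‖w‖:ℂ) ^ 2 / (4 * b)) := h
    _ = (((π / b) ^ ((d : ℝ) / 2) * Real.exp (c ^ 2 * ‖w‖ ^ 2 / (4 * b)) : ℝ) : ℂ) := by
        rw [finrank_euclideanSpace_fin, Complex.ofReal_mul,
          Complex.ofReal_cpow (by positivity), Complex.ofReal_exp]
        push_cast; ring_nf

/-- Sub-Gaussian pointwise bound on the OU density: if `f(x) ≤ β‖x‖²` with
`0 < β < 1/2` and `p₀(x) = Z⁻¹ e^{-‖x‖²/2 + f(x)}`, then for all `t > 0` and `x`,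
`p_t(x) ≤ Z⁻¹ (1-2β)^{-d/2} e^{-(1-2β)‖x‖²/2}`. -/
theorem ou_density_subgaussian_bound {d : ℕ}
    (f : EuclideanSpace ℝ (Fin d) → ℝ) (β Z : ℝ)
    (hβ0 : 0 < β) (hβ : β < 1 / 2) (hZ : 0 < Z)
    (hf : ∀ x, f x ≤ β * ‖x‖ ^ 2)
    (t : ℝ) (ht : 0 < t) (x : EuclideanSpace ℝ (Fin d)) :
    Z⁻¹ * (2 * π * (1 - Real.exp (-2 * t))) ^ (-(d : ℝ) / 2) *
        ∫ y : EuclideanSpace ℝ (Fin d),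
          Real.exp (-‖x - Real.exp (-t) • y‖ ^ 2 / (2 * (1 - Real.exp (-2 * t)))) *
            Real.exp (-‖y‖ ^ 2 / 2 + f y) ≤
      Z⁻¹ * (1 - 2 * β) ^ (-(d : ℝ) / 2) *
        Real.exp (-(1 - 2 * β) * ‖x‖ ^ 2 / 2) := by
  have hπ := Real.pi_pos
  set a : ℝ := Real.exp (-t) with ha
  have ha0 : 0 < a := Real.exp_pos _
  have ha2 : a ^ 2 = Real.exp (-2 * t) := by rw [sq, ← Real.exp_add]; ring_nf
  have hlt : Real.exp (-2 * t) < 1 := Real.exp_lt_one_iff.2 (by linarith)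
  set s : ℝ := 1 - Real.exp (-2 * t) with hsdef
  have hs0 : 0 < s := by rw [hsdef]; linarith
  set c : ℝ := 1 - 2 * β with hcdef
  have hc0 : 0 < c := by rw [hcdef]; linarith
  have hc1 : c < 1 := by rw [hcdef]; linarith
  set A : ℝ := a ^ 2 + c * s with hAdef
  have hsa : s = 1 - a ^ 2 := by rw [hsdef, ha2]
  have hAc : c ≤ A := by rw [hAdef, hsa]; nlinarith [sq_nonneg a]
  have hA1 : A ≤ 1 := by rw [hAdef, hsa]; nlinarith [sq_nonneg a]
  have hA0 : 0 < A := lt_of_lt_of_le hc0 hAc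
  set b : ℝ := A / (2 * s) with hbdef
  have hb0 : 0 < b := by positivity
  -- pointwise bound on the integrand
  have hpt : ∀ y : EuclideanSpace ℝ (Fin d),
      Real.exp (-‖x - a • y‖ ^ 2 / (2 * s)) * Real.exp (-‖y‖ ^ 2 / 2 + f y) ≤
        Real.exp (-‖x‖ ^ 2 / (2 * s)) * Real.exp (-b * ‖y‖ ^ 2 + (a / s) * ⟪x, y⟫) := by
    intro y
    rw [← Real.exp_add, ← Real.exp_add]
    apply Real.exp_le_exp.2
    have hnorm : ‖x - a • y‖ ^ 2 = ‖x‖ ^ 2 - 2 * a * ⟪x, y⟫ + a ^ 2 * ‖y‖ ^ 2 := by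
      rw [norm_sub_sq_real, real_inner_smul_right, norm_smul]
      simp [abs_of_pos ha0]; ring
    have hfy := hf y
    have step1 : -‖x - a • y‖ ^ 2 / (2 * s) + (-‖y‖ ^ 2 / 2 + f y) ≤
        -‖x - a • y‖ ^ 2 / (2 * s) + (-(c * ‖y‖ ^ 2) / 2) := by
      have : -‖y‖ ^ 2 / 2 + f y ≤ -(c * ‖y‖ ^ 2) / 2 := by rw [hcdef]; nlinarith
      linarith
    refine step1.trans (le_of_eq ?_)
    rw [hnorm, hbdef, hAdef]
    field_simp
    ring
  -- integrability of the dominating function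
  have hint : Integrable (fun y : EuclideanSpace ℝ (Fin d) =>
      Real.exp (-‖x‖ ^ 2 / (2 * s)) * Real.exp (-b * ‖y‖ ^ 2 + (a / s) * ⟪x, y⟫)) :=
    (my_integrable hb0 (a / s) x).const_mul _
  -- bound the integral
  have hmono : (∫ y : EuclideanSpace ℝ (Fin d),
      Real.exp (-‖x - a • y‖ ^ 2 / (2 * s)) * Real.exp (-‖y‖ ^ 2 / 2 + f y)) ≤
      Real.exp (-‖x‖ ^ 2 / (2 * s)) *
        ((π / b) ^ ((d : ℝ) / 2) * Real.exp ((a / s) ^ 2 * ‖x‖ ^ 2 / (4 * b))) := by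
    rw [← my_integral hb0 (a / s) x, ← integral_const_mul]
    exact integral_mono_of_nonneg
      (Filter.Eventually.of_forall fun y => by positivity) hint
      (Filter.Eventually.of_forall hpt)
  -- prefactor computation
  have h2bs : 2 * b * s = A := by rw [hbdef]; field_simp
  have key : (2 * π * s) ^ (-(d : ℝ) / 2) * (π / b) ^ ((d : ℝ) / 2) = A ^ (-(d : ℝ) / 2) := by
    have hA' : (2 * π * s)⁻¹ * (π / b) = A⁻¹ := by
      rw [← h2bs]; field_simp
    rw [show -(d : ℝ) / 2 = -((d : ℝ) / 2) by ring, Real.rpow_neg (by positivity),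
      Real.rpow_neg hA0.le, ← Real.inv_rpow (by positivity),
      ← Real.inv_rpow hA0.le, ← Real.mul_rpow (by positivity) (by positivity), hA']
  -- exponent computation
  have hexp : -‖x‖ ^ 2 / (2 * s) + (a / s) ^ 2 * ‖x‖ ^ 2 / (4 * b) =
      -(c * ‖x‖ ^ 2) / (2 * A) := by
    rw [hbdef, hAdef]; field_simp; ring
  have hexp2 : -(c * ‖x‖ ^ 2) / (2 * A) ≤ -(1 - 2 * β) * ‖x‖ ^ 2 / 2 := by
    have h1 : c * ‖x‖ ^ 2 / 2 ≤ c * ‖x‖ ^ 2 / (2 * A) :=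
      div_le_div_of_nonneg_left (by positivity) (by positivity) (by linarith)
    rw [hcdef] at h1 ⊢
    have : -((1 - 2 * β) * ‖x‖ ^ 2) / (2 * A) ≤ -((1 - 2 * β) * ‖x‖ ^ 2) / 2 := by
      rw [neg_div, neg_div]; linarith
    linarith [this]
  calc Z⁻¹ * (2 * π * s) ^ (-(d : ℝ) / 2) *
        ∫ y : EuclideanSpace ℝ (Fin d),
          Real.exp (-‖x - a • y‖ ^ 2 / (2 * s)) * Real.exp (-‖y‖ ^ 2 / 2 + f y)
      ≤ Z⁻¹ * (2 * π * s) ^ (-(d : ℝ) / 2) *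
        (Real.exp (-‖x‖ ^ 2 / (2 * s)) *
          ((π / b) ^ ((d : ℝ) / 2) * Real.exp ((a / s) ^ 2 * ‖x‖ ^ 2 / (4 * b)))) := by
        apply mul_le_mul_of_nonneg_left hmono (by positivity)
    _ = Z⁻¹ * (A ^ (-(d : ℝ) / 2) *
          Real.exp (-(c * ‖x‖ ^ 2) / (2 * A))) := by
        rw [← hexp, Real.exp_add, ← key]; ring
    _ ≤ Z⁻¹ * (c ^ (-(d : ℝ) / 2) * Real.exp (-(1 - 2 * β) * ‖x‖ ^ 2 / 2)) := by
        apply mul_le_mul_of_nonneg_left _ (by positivity)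
        exact mul_le_mul (Real.rpow_le_rpow_of_nonpos hc0 hAc (by have : (0:ℝ) ≤ (d:ℝ) := Nat.cast_nonneg d; linarith))
          (Real.exp_le_exp.2 hexp2) (Real.exp_pos _).le (by positivity)
    _ = Z⁻¹ * c ^ (-(d : ℝ) / 2) * Real.exp (-(1 - 2 * β) * ‖x‖ ^ 2 / 2) := by ring
end

section
/- Let q(x) ∝ exp(-‖x-x_1‖²/(2σ_min²)) + exp(-‖x-x_2‖²/(2σ_max²)) be an (unnormalized) two-component Gaussian mixture with 0 < σ_min ≤ σ_max, and write f(x) = ‖x‖²/2 + log q(x). Then for any ε > 0 there exists r_ε > 0 such that for all ‖x‖ ≥ r_ε, -((1 - σ_min² + ε)/(2σ_min²))‖x‖² ≤ f(x) ≤ ((σ_max² - 1 + ε)/(2σ_max²))‖x‖². -/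
set_option maxHeartbeats 1600000 in
/-- Asymptotic quadratic growth bounds for the log-relative density of a two-component
Gaussian mixture with respect to the standard Gaussian. -/
theorem gaussian_mixture_log_relative_density_growth {d : ℕ}
    (x₁ x₂ : EuclideanSpace ℝ (Fin d)) (σmin σmax c : ℝ)
    (hσmin : 0 < σmin) (hσ : σmin ≤ σmax) (hc : 0 < c)
    (q f : EuclideanSpace ℝ (Fin d) → ℝ)
    (hq : ∀ x, q x = c * (Real.exp (-‖x - x₁‖ ^ 2 / (2 * σmin ^ 2)) +
        Real.exp (-‖x - x₂‖ ^ 2 / (2 * σmax ^ 2))))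
    (hf : ∀ x, f x = ‖x‖ ^ 2 / 2 + Real.log (q x)) :
    ∀ ε > 0, ∃ r > 0, ∀ x : EuclideanSpace ℝ (Fin d), r ≤ ‖x‖ →
      -((1 - σmin ^ 2 + ε) / (2 * σmin ^ 2)) * ‖x‖ ^ 2 ≤ f x ∧
        f x ≤ ((σmax ^ 2 - 1 + ε) / (2 * σmax ^ 2)) * ‖x‖ ^ 2 := by
  intro ε hε
  have hσmax : 0 < σmax := lt_of_lt_of_le hσmin hσ
  set R : ℝ := max ‖x₁‖ ‖x₂‖ with hRdef
  have hR0 : 0 ≤ R := le_trans (norm_nonneg x₁) (le_max_left _ _)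
  set K : ℝ := 2*R + R^2 + 2*σmin^2*|Real.log c| + 2*σmax^2*|Real.log (2*c)| with hKdef
  have hK0 : 0 ≤ K := by positivity
  refine ⟨1 + R + K/ε, by positivity, fun x hx => ?_⟩
  have hx1 : 1 ≤ ‖x‖ := by
    have : (0 : ℝ) ≤ R + K/ε := by positivity
    linarith
  have hxR : R ≤ ‖x‖ := by
    have : (0 : ℝ) ≤ 1 + K/ε := by positivity
    linarith
  have hεx : ε + K ≤ ε * ‖x‖ := by
    have h1 : ε * (1 + R + K/ε) ≤ ε * ‖x‖ :=
      mul_le_mul_of_nonneg_left hx hε.le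
    have h2 : ε * (1 + R + K/ε) = ε + ε*R + K := by
      field_simp
    nlinarith [mul_nonneg hε.le hR0]
  have h1x : (ε + K) * ‖x‖ ≤ ε * ‖x‖ * ‖x‖ :=
    mul_le_mul_of_nonneg_right hεx (norm_nonneg x)
  -- key scalar inequalities
  have h1x' : (ε + (2*R + R^2 + 2*σmin^2*|Real.log c| + 2*σmax^2*|Real.log (2*c)|)) * ‖x‖
      ≤ ε * ‖x‖ * ‖x‖ := by rw [← hKdef]; exact h1x
  have hL1 : 2*R*‖x‖ + R^2 + 2*σmin^2*|Real.log c| ≤ ε * ‖x‖^2 := by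
    nlinarith [mul_nonneg (sub_nonneg.mpr hx1) (by positivity : (0:ℝ) ≤ R^2 + 2*σmin^2*|Real.log c|),
      mul_nonneg (norm_nonneg x) (by positivity : (0:ℝ) ≤ 2*σmax^2*|Real.log (2*c)|),
      mul_nonneg hε.le (norm_nonneg x), mul_nonneg hR0 (norm_nonneg x)]
  have hL2 : 2*R*‖x‖ + 2*σmax^2*|Real.log (2*c)| ≤ ε * ‖x‖^2 + R^2 := by
    nlinarith [mul_nonneg (sub_nonneg.mpr hx1) (by positivity : (0:ℝ) ≤ 2*σmax^2*|Real.log (2*c)|),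
      mul_nonneg (norm_nonneg x) (by positivity : (0:ℝ) ≤ R^2 + 2*σmin^2*|Real.log c|),
      mul_nonneg hε.le (norm_nonneg x), mul_nonneg hR0 (norm_nonneg x), sq_nonneg R]
  have hqpos : 0 < q x := by
    rw [hq]
    positivity
  have hd1 : ‖x‖ - R ≤ ‖x - x₁‖ := by
    have h1 : ‖x₁‖ ≤ R := le_max_left _ _
    have h := norm_sub_norm_le x x₁
    linarith
  have hd2 : ‖x‖ - R ≤ ‖x - x₂‖ := by
    have h1 : ‖x₂‖ ≤ R := le_max_right _ _
    have h := norm_sub_norm_le x x₂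
    linarith
  have hu1 : ‖x - x₁‖ ≤ ‖x‖ + R := by
    have h1 : ‖x₁‖ ≤ R := le_max_left _ _
    have h := norm_sub_le x x₁
    linarith
  have hxRnn : 0 ≤ ‖x‖ - R := by linarith
  have hsq1 : (‖x‖ - R)^2 ≤ ‖x - x₁‖^2 := pow_le_pow_left₀ hxRnn hd1 2
  have hsq2 : (‖x‖ - R)^2 ≤ ‖x - x₂‖^2 := pow_le_pow_left₀ hxRnn hd2 2
  have hsqu1 : ‖x - x₁‖^2 ≤ (‖x‖ + R)^2 := pow_le_pow_left₀ (norm_nonneg _) hu1 2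
  have h2min : (0:ℝ) < 2*σmin^2 := by positivity
  have h2max : (0:ℝ) < 2*σmax^2 := by positivity
  -- lower bound on log q x
  have hlog_lb : Real.log c - (‖x‖ + R)^2/(2*σmin^2) ≤ Real.log (q x) := by
    have hqlb : c * Real.exp (-(‖x‖ + R)^2 / (2*σmin^2)) ≤ q x := by
      rw [hq]
      have he : Real.exp (-(‖x‖ + R)^2 / (2*σmin^2)) ≤
          Real.exp (-‖x - x₁‖^2 / (2*σmin^2)) :=
        Real.exp_le_exp.mpr ((div_le_div_iff_of_pos_right h2min).mpr (by linarith))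
      have hb : (0:ℝ) ≤ Real.exp (-‖x - x₂‖ ^ 2 / (2*σmax^2)) := (Real.exp_pos _).le
      have h3 : Real.exp (-(‖x‖ + R)^2 / (2*σmin^2)) ≤
          Real.exp (-‖x - x₁‖ ^ 2 / (2 * σmin ^ 2)) + Real.exp (-‖x - x₂‖ ^ 2 / (2 * σmax ^ 2)) := by
        refine le_add_of_le_of_nonneg ?_ hb
        convert he using 3 <;> ring
      exact mul_le_mul_of_nonneg_left h3 hc.le
    have h := Real.log_le_log (by positivity) hqlb
    rw [Real.log_mul hc.ne' (Real.exp_ne_zero _), Real.log_exp] at h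
    have : Real.log c + -(‖x‖ + R)^2 / (2*σmin^2) =
        Real.log c - (‖x‖ + R)^2/(2*σmin^2) := by ring
    linarith [this ▸ h]
  -- upper bound on log q x
  have hlog_ub : Real.log (q x) ≤ Real.log (2*c) - (‖x‖ - R)^2/(2*σmax^2) := by
    have hqub : q x ≤ (2*c) * Real.exp (-(‖x‖ - R)^2 / (2*σmax^2)) := by
      rw [hq]
      have ha : Real.exp (-‖x - x₁‖^2 / (2*σmin^2)) ≤
          Real.exp (-(‖x‖ - R)^2 / (2*σmax^2)) := by
        apply Real.exp_le_exp.mpr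
        have hA : (‖x‖ - R)^2/(2*σmax^2) ≤ (‖x‖ - R)^2/(2*σmin^2) := by
          apply div_le_div_of_nonneg_left (sq_nonneg _) h2min
          nlinarith
        have hB : (‖x‖ - R)^2/(2*σmin^2) ≤ ‖x - x₁‖^2/(2*σmin^2) :=
          (div_le_div_iff_of_pos_right h2min).mpr hsq1
        have h1 : -‖x - x₁‖^2 / (2*σmin^2) = -(‖x - x₁‖^2/(2*σmin^2)) := by ring
        have h2 : -(‖x‖ - R)^2 / (2*σmax^2) = -((‖x‖ - R)^2/(2*σmax^2)) := by ring
        rw [h1, h2]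
        linarith
      have hb : Real.exp (-‖x - x₂‖^2 / (2*σmax^2)) ≤
          Real.exp (-(‖x‖ - R)^2 / (2*σmax^2)) :=
        Real.exp_le_exp.mpr ((div_le_div_iff_of_pos_right h2max).mpr (by linarith))
      have ha' : Real.exp (-‖x - x₁‖ ^ 2 / (2 * σmin ^ 2)) ≤
          Real.exp (-(‖x‖ - R)^2 / (2*σmax^2)) := by
        convert ha using 3 <;> ring
      have hb' : Real.exp (-‖x - x₂‖ ^ 2 / (2 * σmax ^ 2)) ≤
          Real.exp (-(‖x‖ - R)^2 / (2*σmax^2)) := by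
        convert hb using 3 <;> ring
      calc c * (Real.exp (-‖x - x₁‖ ^ 2 / (2 * σmin ^ 2)) + Real.exp (-‖x - x₂‖ ^ 2 / (2 * σmax ^ 2)))
          ≤ c * (Real.exp (-(‖x‖ - R)^2 / (2*σmax^2)) + Real.exp (-(‖x‖ - R)^2 / (2*σmax^2))) :=
            mul_le_mul_of_nonneg_left (add_le_add ha' hb') hc.le
        _ = 2 * c * Real.exp (-(‖x‖ - R)^2 / (2*σmax^2)) := by ring
    have h := Real.log_le_log hqpos hqub
    rw [Real.log_mul (by positivity) (Real.exp_ne_zero _), Real.log_exp] at h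
    have he : Real.log (2*c) + -(‖x‖ - R)^2 / (2*σmax^2) =
        Real.log (2*c) - (‖x‖ - R)^2/(2*σmax^2) := by ring
    linarith [he ▸ h]
  rw [hf]
  constructor
  · have key : -((1 - σmin^2 + ε)/(2*σmin^2))*‖x‖^2 ≤
        ‖x‖^2/2 + (Real.log c - (‖x‖ + R)^2/(2*σmin^2)) := by
      rw [← sub_nonneg]
      have heq : ‖x‖^2/2 + (Real.log c - (‖x‖ + R)^2/(2*σmin^2)) -
          (-((1 - σmin^2 + ε)/(2*σmin^2))*‖x‖^2) =
          (ε*‖x‖^2 - (2*R*‖x‖ + R^2) + 2*σmin^2*Real.log c)/(2*σmin^2) := by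
        field_simp
        ring
      rw [heq]
      apply div_nonneg _ h2min.le
      nlinarith [neg_abs_le (Real.log c)]
    linarith
  · have key : ‖x‖^2/2 + (Real.log (2*c) - (‖x‖ - R)^2/(2*σmax^2)) ≤
        ((σmax^2 - 1 + ε)/(2*σmax^2))*‖x‖^2 := by
      rw [← sub_nonneg]
      have heq : ((σmax^2 - 1 + ε)/(2*σmax^2))*‖x‖^2 -
          (‖x‖^2/2 + (Real.log (2*c) - (‖x‖ - R)^2/(2*σmax^2))) =
          (ε*‖x‖^2 + R^2 - 2*R*‖x‖ - 2*σmax^2*Real.log (2*c))/(2*σmax^2) := by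
        field_simp
        ring
      rw [heq]
      apply div_nonneg _ h2max.le
      nlinarith [le_abs_self (Real.log (2*c))]
    linarith
end
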